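/- Under the adding machine map T on the Cantor set, the closest returns of z = 0 occur exactly at the powers of 2: for each n, the minimum of |T^k(z) - z| over 1 ≤ k ≤ 2^n is attained at k = 2^n and equals 2/3^{n+1}. -/

import Mathlib

open MeasureTheory Filter
open scoped Classical

/-- The point of the middle-third Cantor set with ternary code `x`
(digit `true` ↦ 2, `false` ↦ 0): `x = Σ_{k≥1} 2 x_k / 3^k`. -/
noncomputable def cantorVal (x : ℕ → Bool) : ℝ :=
  ∑' k : ℕ, (if x k then 2 else 0) / 3 ^ (k + 1)

/-- The adding machine on codes: set the first digit equal to `false` (i.e. 0) to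
`true` (i.e. 1) and all earlier digits to `false`; `111... ↦ 000...`. -/
noncomputable def addingMachine (x : ℕ → Bool) : ℕ → Bool :=
  if h : ∃ n, x n = false then
    fun k => if k < Nat.find h then false else if k = Nat.find h then true else x k
  else fun _ => false

-- auxiliary lemmas

lemma testBit_div_pow (n j i : ℕ) : Nat.testBit (n / 2 ^ j) i = Nat.testBit n (j + i) := by
  induction j generalizing n i with
  | zero => simp
  | succ j ih =>
    rw [pow_succ, ← Nat.div_div_eq_div_mul, Nat.testBit_div_two, ih,
      show j + (i + 1) = j + 1 + i by omega]

lemma step_lemma (k : ℕ) :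
    addingMachine (fun i => Nat.testBit k i) = fun i => Nat.testBit (k + 1) i := by
  have hex : ∃ n, Nat.testBit k n = false :=
    ⟨k, Nat.testBit_lt_two_pow (Nat.lt_two_pow_self (n := k))⟩
  set m := Nat.find hex with hm
  have hmf : Nat.testBit k m = false := Nat.find_spec hex
  have hlt : ∀ i < m, Nat.testBit k i = true := by
    intro i hi
    have := Nat.find_min hex hi
    simpa using this
  -- k % 2^(m+1) = 2^m - 1
  have hmod : k % 2 ^ (m + 1) = 2 ^ m - 1 := by
    apply Nat.eq_of_testBit_eq
    intro i
    rw [Nat.testBit_mod_two_pow, Nat.testBit_two_pow_sub_one]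
    rcases lt_trichotomy i m with h | h | h
    · simp [h, Nat.lt_succ_of_lt h, hlt i h]
    · simp [h, hmf]
    · simp [Nat.not_lt_of_gt h, show ¬ i < m + 1 by omega]
  set q := k / 2 ^ (m + 1) with hq
  have hk : k = 2 ^ (m + 1) * q + (2 ^ m - 1) := by
    rw [← hmod, hq, Nat.div_add_mod]
  have hpow : (1:ℕ) ≤ 2 ^ m := Nat.one_le_two_pow
  have hk1 : k + 1 = 2 ^ (m + 1) * q + 2 ^ m := by omega
  have hdiv : (k + 1) / 2 ^ (m + 1) = q := by
    rw [hk1, Nat.mul_add_div (Nat.two_pow_pos _),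
      Nat.div_eq_of_lt (by rw [pow_succ]; omega), add_zero]
  have hmod1 : (k + 1) % 2 ^ (m + 1) = 2 ^ m := by
    rw [hk1, Nat.mul_add_mod, Nat.mod_eq_of_lt (by rw [pow_succ]; omega)]
  funext i
  rw [addingMachine, dif_pos hex]
  rcases lt_trichotomy i m with h | h | h
  · simp only [← hm, if_pos h]
    have : Nat.testBit (k + 1) i = Nat.testBit ((k + 1) % 2 ^ (m + 1)) i := by
      rw [Nat.testBit_mod_two_pow]
      simp [show i < m + 1 by omega]
    rw [this, hmod1, Nat.testBit_two_pow]
    simp [Nat.ne_of_gt h]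
  · simp only [← hm, if_neg (by omega : ¬ i < m), if_pos h]
    have : Nat.testBit (k + 1) i = Nat.testBit ((k + 1) % 2 ^ (m + 1)) i := by
      rw [Nat.testBit_mod_two_pow]
      simp [show i < m + 1 by omega]
    rw [this, hmod1, h, Nat.testBit_two_pow_self]
  · simp only [← hm, if_neg (by omega : ¬ i < m), if_neg (by omega : i ≠ m)]
    have hi : i = (m + 1) + (i - (m + 1)) := by omega
    rw [hi, ← testBit_div_pow, ← testBit_div_pow, hdiv, ← hq]

lemma iterate_lemma (k : ℕ) :
    addingMachine^[k] (fun _ => false) = fun i => Nat.testBit k i := by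
  induction k with
  | zero => simp [Nat.zero_testBit]
  | succ k ih =>
    rw [Function.iterate_succ_apply', ih, step_lemma]

lemma summable_cantor (x : ℕ → Bool) :
    Summable (fun k : ℕ => (if x k then (2:ℝ) else 0) / 3 ^ (k + 1)) := by
  have key : ∀ k : ℕ, (2:ℝ)/3 * (1/3) ^ k = 2 / 3 ^ (k + 1) := by
    intro k
    rw [div_pow, one_pow, div_mul_div_comm, mul_one, ← pow_succ']
  refine Summable.of_nonneg_of_le (fun k => ?_) (fun k => ?_)
    (((summable_geometric_of_lt_one (r := (1/3:ℝ)) (by norm_num) (by norm_num)).mul_left (2/3 : ℝ)))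
  · rcases x k with _ | _ <;> simp <;> positivity
  · rw [key]
    rcases x k with _ | _ <;> simp <;> positivity

lemma cantorVal_nonneg (x : ℕ → Bool) : 0 ≤ cantorVal x := by
  apply tsum_nonneg; intro k; positivity

lemma cantorVal_zero : cantorVal (fun _ => false) = 0 := by
  simp [cantorVal]

lemma cantorVal_ge (x : ℕ → Bool) (j : ℕ) (hj : x j = true) :
    2 / 3 ^ (j + 1) ≤ cantorVal x := by
  have := Summable.le_tsum (summable_cantor x) j (fun i _ => by positivity)
  rwa [hj, if_pos rfl] at this

lemma cantorVal_pow (n : ℕ) :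
    cantorVal (fun i => Nat.testBit (2 ^ n) i) = 2 / 3 ^ (n + 1) := by
  rw [cantorVal, tsum_eq_single n]
  · rw [Nat.testBit_two_pow_self, if_pos rfl]
  · intro b hb
    rw [Nat.testBit_two_pow]
    simp [Ne.symm hb]

theorem stmt_18 (z : ℕ → Bool) (hz : z = fun _ => false) : ∀ n : ℕ,
    (∀ k : ℕ, 1 ≤ k → k ≤ 2 ^ n →
      2 / 3 ^ (n + 1) ≤ |cantorVal (addingMachine^[k] z) - cantorVal z|) ∧
    |cantorVal (addingMachine^[2 ^ n] z) - cantorVal z| = 2 / 3 ^ (n + 1) := by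
  subst hz
  intro n
  have habs : ∀ k : ℕ, |cantorVal (addingMachine^[k] (fun _ => false)) -
      cantorVal (fun _ => false)| = cantorVal (fun i => Nat.testBit k i) := by
    intro k
    rw [cantorVal_zero, sub_zero, iterate_lemma, abs_of_nonneg (cantorVal_nonneg _)]
  constructor
  · intro k hk1 hk2
    rw [habs]
    obtain ⟨j, hj⟩ := Nat.exists_testBit_of_ne_zero (by omega : k ≠ 0)
    have hjk : 2 ^ j ≤ k := Nat.ge_two_pow_of_testBit hj
    have hjn : j ≤ n := by
      have : (2:ℕ) ^ j ≤ 2 ^ n := le_trans hjk hk2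
      exact (Nat.pow_le_pow_iff_right (by norm_num)).mp this
    calc (2:ℝ) / 3 ^ (n + 1) ≤ 2 / 3 ^ (j + 1) := by
          gcongr <;> norm_num
      _ ≤ cantorVal (fun i => Nat.testBit k i) := cantorVal_ge _ j hj
  · rw [habs, cantorVal_pow]
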